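/- arXiv:1712.09854 — 3 statements merged into one kernel-verified Lean document; each statement's English description precedes it below -/
import Mathlib

section
/- Let $X=(X_t)_{t\in[0,T]}$ and $Y=(Y_t)_{t\in[0,T]}$ be mutually independent $d$-dimensional continuous processes. If $X$ has conditional full support with respect to its natural filtration $\mathbb{F}^X$, then the sum $X+Y$ has conditional full support with respect to its natural filtration $\mathbb{F}^{X+Y}$. -/
open MeasureTheory ProbabilityTheory Set
noncomputable section
variable {Ω : Type*}

/-- The small-ball event: the path of `X` on `[t₀,T]` stays `ε`-close to `X t₀ + f`. -/
def sbEvent {E : Type*} [NormedAddCommGroup E] (X : ℝ → Ω → E) (t₀ T ε : ℝ) (f : ℝ → E) : Set Ω :=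
  {ω | ∀ t ∈ Set.Icc t₀ T, ‖X t ω - X t₀ ω - f t‖ < ε}

/-- Conditional full support (conditional small ball property) of the process `X` on `[0,T]`
with respect to the filtration `F`. -/
def HasCFS {E : Type*} [NormedAddCommGroup E] [m0 : MeasurableSpace Ω] (μ : Measure Ω) (T : ℝ)
    (F : ℝ → MeasurableSpace Ω) (X : ℝ → Ω → E) : Prop :=
  ∀ t₀ ∈ Set.Ico (0:ℝ) T, ∀ f : ℝ → E, ContinuousOn f (Set.Icc t₀ T) → f t₀ = 0 →
    ∀ ε > 0, ∀ᵐ ω ∂μ,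
      0 < (μ[(sbEvent X t₀ T ε f).indicator (fun _ => (1:ℝ)) | F t₀]) ω

/-- The natural filtration of a process. -/
def natFilt {E : Type*} [MeasurableSpace E] [MeasurableSpace Ω] (X : ℝ → Ω → E) (t : ℝ) :
    MeasurableSpace Ω := ⨆ s ∈ Set.Iic t, MeasurableSpace.comap (X s) inferInstance

/-- The usual augmentation of a filtration: smallest right-continuous complete enlargement. -/
def usualAug [MeasurableSpace Ω] (μ : Measure Ω) (F : ℝ → MeasurableSpace Ω) (t : ℝ) :
    MeasurableSpace Ω :=
  ⨅ s ∈ Set.Ioi t, (F s ⊔ MeasurableSpace.generateFrom {N : Set Ω | μ N = 0})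

/-- The σ-algebra generated by a whole process. -/
def processSigma {E : Type*} [MeasurableSpace E] [MeasurableSpace Ω] (X : ℝ → Ω → E) :
    MeasurableSpace Ω := ⨆ t : ℝ, MeasurableSpace.comap (X t) inferInstance

/-!
Condition on `𝒢 = 𝔽^X_{t₀} ∨ σ(Y)`, which contains `𝔽^{X+Y}_{t₀}`. Since `Y` is independent of
`X`, conditioning an `X`-event on `𝒢` is the same as conditioning it on `𝔽^X_{t₀}`, so the small
ball property of `X` persists under `𝒢`. Cover the paths of `Y` by countably many `ε/2`-tubes
around paths `g n`; a `𝒢`-event of positive probability meets one of these tubes in positive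
probability, and there the event that `X` stays `ε/2`-close to `f - g n` has positive conditional
probability, which forces `X + Y` to stay `ε`-close to `f`.
-/

section SmallBall

variable {E : Type*} [NormedAddCommGroup E]

theorem forall_lt_iff_exists_forall_le_of_denseRange {K : Type*} [TopologicalSpace K]
    [CompactSpace K] {u : ℕ → K} (hu : DenseRange u) {h : K → ℝ} (hh : Continuous h) {ε : ℝ} :
    (∀ x, h x < ε) ↔ ∃ n : ℕ, ∀ k, h (u k) ≤ ε - 1 / (n + 1) := by
  constructor
  · intro hlt
    obtain ⟨x₀, -, hx₀⟩ := isCompact_univ.exists_isMaxOn ⟨u 0, mem_univ _⟩ hh.continuousOn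
    obtain ⟨n, hn⟩ := exists_nat_one_div_lt (sub_pos.mpr (hlt x₀))
    exact ⟨n, fun k => by linarith [isMaxOn_iff.mp hx₀ (u k) (mem_univ _)]⟩
  · rintro ⟨n, hn⟩ x
    have hx : h x ≤ ε - 1 / (n + 1) :=
      hu.induction_on x (isClosed_le hh continuous_const) hn
    linarith [Nat.one_div_pos_of_nat (α := ℝ) (n := n)]

theorem measurableSet_sbEvent [MeasurableSpace E] [BorelSpace E] [SecondCountableTopology E]
    {m : MeasurableSpace Ω} {X : ℝ → Ω → E} (hX : ∀ t, Measurable[m] (X t))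
    (hcont : ∀ ω, Continuous fun t => X t ω) {t₀ T : ℝ} (hle : t₀ ≤ T) {f : ℝ → E}
    (hf : ContinuousOn f (Icc t₀ T)) (ε : ℝ) :
    MeasurableSet[m] (sbEvent X t₀ T ε f) := by
  have : Nonempty (Icc t₀ T) := (nonempty_Icc.mpr hle).to_subtype
  set u := TopologicalSpace.denseSeq (Icc t₀ T)
  have hsb : sbEvent X t₀ T ε f =
      ⋃ n : ℕ, ⋂ k, {ω | ‖X (u k) ω - X t₀ ω - f (u k)‖ ≤ ε - 1 / (n + 1)} := by
    ext ω
    simpa [sbEvent] using forall_lt_iff_exists_forall_le_of_denseRange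
      (TopologicalSpace.denseRange_denseSeq _)
      ((((hcont ω).sub continuous_const).continuousOn.sub hf).domRestrict.norm) (ε := ε)
  rw [hsb]
  exact .iUnion fun n => .iInter fun k =>
    measurableSet_le (((hX _).sub (hX t₀)).sub measurable_const).norm measurable_const

theorem sbEvent_inter_subset_sbEvent_add (X Y : ℝ → Ω → E) (t₀ T δ₁ δ₂ : ℝ) (f₁ f₂ : ℝ → E) :
    sbEvent X t₀ T δ₁ f₁ ∩ sbEvent Y t₀ T δ₂ f₂ ⊆
      sbEvent (fun t ω => X t ω + Y t ω) t₀ T (δ₁ + δ₂) (fun t => f₁ t + f₂ t) := by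
  rintro ω ⟨hX, hY⟩ t ht
  calc ‖X t ω + Y t ω - (X t₀ ω + Y t₀ ω) - (f₁ t + f₂ t)‖
      = ‖(X t ω - X t₀ ω - f₁ t) + (Y t ω - Y t₀ ω - f₂ t)‖ := by congr 1; abel
    _ ≤ ‖X t ω - X t₀ ω - f₁ t‖ + ‖Y t ω - Y t₀ ω - f₂ t‖ := norm_add_le _ _
    _ < δ₁ + δ₂ := add_lt_add (hX t ht) (hY t ht)

theorem exists_seq_approx_increments [SecondCountableTopology E] {a b : ℝ} (hab : a ≤ b)
    {ε : ℝ} (hε : 0 < ε) :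
    ∃ g : ℕ → ℝ → E, (∀ n, Continuous (g n)) ∧ (∀ n, g n a = 0) ∧
      ∀ p : ℝ → E, ContinuousOn p (Icc a b) → ∃ n, ∀ t ∈ Icc a b, ‖p t - p a - g n t‖ < ε := by
  set u := TopologicalSpace.denseSeq C(Icc a b, E)
  have ha : a ∈ Icc a b := left_mem_Icc.mpr hab
  refine ⟨fun n t => IccExtend hab (u n) t - u n ⟨a, ha⟩,
    fun n => (u n).continuous.Icc_extend'.sub continuous_const, fun n => ?_, fun p hp => ?_⟩
  · simp
  obtain ⟨n, hn⟩ := Metric.denseRange_iff.mp (TopologicalSpace.denseRange_denseSeq _)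
    (⟨_, hp.domRestrict⟩ : C(Icc a b, E)) (ε / 2) (half_pos hε)
  have hclose : ∀ x : Icc a b, ‖p x - u n x‖ < ε / 2 := fun x => by
    rw [← dist_eq_norm]; exact (ContinuousMap.dist_apply_le_dist x).trans_lt hn
  refine ⟨n, fun t ht => ?_⟩
  calc ‖p t - p a - (IccExtend hab (u n) t - u n ⟨a, ha⟩)‖
      = ‖(p t - u n ⟨t, ht⟩) - (p a - u n ⟨a, ha⟩)‖ := by
        rw [IccExtend_of_mem hab _ ht]; congr 1; abel
    _ ≤ ‖p t - u n ⟨t, ht⟩‖ + ‖p a - u n ⟨a, ha⟩‖ := norm_sub_le _ _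
    _ < ε / 2 + ε / 2 := add_lt_add (hclose ⟨t, ht⟩) (hclose ⟨a, ha⟩)
    _ = ε := add_halves ε

end SmallBall

section CondExp

variable {m0 : MeasurableSpace Ω} {μ : Measure Ω}

theorem ae_pos_condExp_indicator_iff [IsFiniteMeasure μ] {F : MeasurableSpace Ω} (hF : F ≤ m0)
    {S : Set Ω} (hS : MeasurableSet[m0] S) :
    (∀ᵐ ω ∂μ, 0 < μ[S.indicator (fun _ => (1 : ℝ)) | F] ω) ↔
      ∀ A, MeasurableSet[F] A → 0 < μ A → 0 < μ (A ∩ S) := by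
  set φ := μ[S.indicator (fun _ => (1 : ℝ)) | F]
  have hint : Integrable (S.indicator fun _ => (1 : ℝ)) μ := (integrable_const 1).indicator hS
  have hφA : ∀ A, MeasurableSet[F] A → ∫ ω in A, φ ω ∂μ = μ.real (A ∩ S) := fun A hA => by
    rw [setIntegral_condExp hF hint hA, setIntegral_indicator hS, setIntegral_const,
      smul_eq_mul, mul_one]
  constructor
  · intro hpos A hA hμA
    have hsupp : μ (Function.support φ)ᶜ = 0 :=
      measure_mono_null (fun ω hω => by simp_all) (ae_iff.mp hpos)
    have hφA_pos : 0 < ∫ ω in A, φ ω ∂μ := by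
      rw [setIntegral_pos_iff_support_of_nonneg_ae
        (ae_restrict_of_ae (hpos.mono fun _ => le_of_lt)) integrable_condExp.integrableOn,
        inter_comm, measure_inter_conull hsupp]
      exact hμA
    rw [hφA A hA] at hφA_pos
    exact (ENNReal.toReal_pos_iff.mp hφA_pos).1
  · intro h
    set A := {ω | φ ω ≤ 0}
    have hA : MeasurableSet[F] A :=
      measurableSet_le stronglyMeasurable_condExp.measurable measurable_const
    have hμA : μ A = 0 := by
      by_contra hne
      have hpos : 0 < μ.real (A ∩ S) :=
        ENNReal.toReal_pos (h A hA (pos_iff_ne_zero.mpr hne)).ne' (measure_ne_top μ _)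
      have hnonpos : ∫ ω in A, φ ω ∂μ ≤ 0 := setIntegral_nonpos (hF _ hA) fun _ hω => hω
      linarith [hφA A hA]
    filter_upwards [measure_eq_zero_iff_ae_notMem.mp hμA] with ω hω
    exact not_le.mp hω

theorem isPiSystem_image2_inter (m₁ m₂ : MeasurableSpace Ω) :
    IsPiSystem (image2 (· ∩ ·) {s | MeasurableSet[m₁] s} {s | MeasurableSet[m₂] s}) := by
  rintro _ ⟨B₁, hB₁, C₁, hC₁, rfl⟩ _ ⟨B₂, hB₂, C₂, hC₂, rfl⟩ -
  exact ⟨B₁ ∩ B₂, hB₁.inter hB₂, C₁ ∩ C₂, hC₁.inter hC₂, inter_inter_inter_comm _ _ _ _⟩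

theorem sup_eq_generateFrom_image2_inter (m₁ m₂ : MeasurableSpace Ω) :
    m₁ ⊔ m₂ =
      .generateFrom (image2 (· ∩ ·) {s | MeasurableSet[m₁] s} {s | MeasurableSet[m₂] s}) := by
  refine le_antisymm (sup_le (fun s hs => ?_) (fun s hs => ?_))
    (MeasurableSpace.generateFrom_le ?_)
  · exact .basic _ ⟨s, hs, univ, .univ, inter_univ s⟩
  · exact .basic _ ⟨univ, .univ, s, hs, univ_inter s⟩
  · rintro _ ⟨B, hB, C, hC, rfl⟩
    exact (le_sup_left (b := m₂) _ hB).inter (le_sup_right (a := m₁) _ hC)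

variable {E : Type*} [NormedAddCommGroup E] [NormedSpace ℝ E]

theorem setIntegral_eq_of_forall_setIntegral_inter_eq {m₁ m₂ : MeasurableSpace Ω}
    (hm₁ : m₁ ≤ m0) (hm₂ : m₂ ≤ m0) {g h : Ω → E} (hg : Integrable g μ) (hh : Integrable h μ)
    (heq : ∀ B C, MeasurableSet[m₁] B → MeasurableSet[m₂] C →
      ∫ ω in B ∩ C, g ω ∂μ = ∫ ω in B ∩ C, h ω ∂μ)
    {D : Set Ω} (hD : MeasurableSet[m₁ ⊔ m₂] D) :
    ∫ ω in D, g ω ∂μ = ∫ ω in D, h ω ∂μ := by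
  have hle : m₁ ⊔ m₂ ≤ m0 := sup_le hm₁ hm₂
  have huniv : ∫ ω, g ω ∂μ = ∫ ω, h ω ∂μ := by
    simpa using heq univ univ .univ .univ
  refine MeasurableSpace.induction_on_inter (sup_eq_generateFrom_image2_inter m₁ m₂)
    (isPiSystem_image2_inter m₁ m₂) (by simp) ?_ ?_ ?_ D hD
  · rintro _ ⟨B, hB, C, hC, rfl⟩
    exact heq B C hB hC
  · intro t ht iht
    rw [setIntegral_compl (hle _ ht) hg, setIntegral_compl (hle _ ht) hh, iht, huniv]
  · intro s hdisj hs ihs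
    rw [integral_iUnion (fun i => hle _ (hs i)) hdisj hg.integrableOn,
      integral_iUnion (fun i => hle _ (hs i)) hdisj hh.integrableOn]
    exact tsum_congr ihs

theorem setIntegral_inter_of_indep [CompleteSpace E] [IsFiniteMeasure μ]
    {m₁ m₂ : MeasurableSpace Ω} (hm₁ : m₁ ≤ m0) (hm₂ : m₂ ≤ m0) (hind : Indep m₁ m₂ μ) {g : Ω → E}
    (hg : StronglyMeasurable[m₁] g) (hgi : Integrable g μ) {B C : Set Ω}
    (hB : MeasurableSet[m₁] B) (hC : MeasurableSet[m₂] C) :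
    ∫ ω in B ∩ C, g ω ∂μ = μ.real C • ∫ ω in B, g ω ∂μ := by
  have hBg : StronglyMeasurable[m₁] (B.indicator g) := hg.indicator hB
  calc ∫ ω in B ∩ C, g ω ∂μ
      = ∫ ω in C, μ[B.indicator g | m₂] ω ∂μ := by
        rw [setIntegral_condExp hm₂ (hgi.indicator (hm₁ _ hB)) hC,
          setIntegral_indicator (hm₁ _ hB), inter_comm]
    _ = ∫ ω in C, (∫ ω, B.indicator g ω ∂μ) ∂μ :=
        setIntegral_congr_ae (hm₂ _ hC) ((condExp_indep_eq hm₁ hm₂ hBg hind).mono fun _ h _ => h)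
    _ = μ.real C • ∫ ω in B, g ω ∂μ := by
        rw [setIntegral_const, integral_indicator (hm₁ _ hB)]

theorem condExp_sup_indep_eq [CompleteSpace E] [IsFiniteMeasure μ]
    {F mX mY : MeasurableSpace Ω} (hF : F ≤ mX) (hmX : mX ≤ m0) (hmY : mY ≤ m0)
    (hind : Indep mX mY μ) {f : Ω → E} (hf : StronglyMeasurable[mX] f) (hfi : Integrable f μ) :
    μ[f | F ⊔ mY] =ᵐ[μ] μ[f | F] := by
  have hFm0 : F ≤ m0 := hF.trans hmX
  refine (ae_eq_condExp_of_forall_setIntegral_eq (sup_le hFm0 hmY) hfi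
    (fun _ _ _ => integrable_condExp.integrableOn) (fun D hD _ => ?_)
    (stronglyMeasurable_condExp.mono le_sup_left).aestronglyMeasurable).symm
  refine setIntegral_eq_of_forall_setIntegral_inter_eq hFm0 hmY integrable_condExp hfi
    (fun B C hB hC => ?_) hD
  rw [setIntegral_inter_of_indep hmX hmY hind (stronglyMeasurable_condExp.mono hF)
      integrable_condExp (hF _ hB) hC,
    setIntegral_inter_of_indep hmX hmY hind hf hfi (hF _ hB) hC, setIntegral_condExp hFm0 hfi hB]

theorem measure_inter_pos_of_ae_pos_condExp_of_indep [IsFiniteMeasure μ]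
    {F mX mY : MeasurableSpace Ω} (hF : F ≤ mX) (hmX : mX ≤ m0) (hmY : mY ≤ m0)
    (hind : Indep mX mY μ) {S : Set Ω} (hS : MeasurableSet[mX] S)
    (hpos : ∀ᵐ ω ∂μ, 0 < μ[S.indicator (fun _ => (1 : ℝ)) | F] ω)
    {D : Set Ω} (hD : MeasurableSet[F ⊔ mY] D) (hμD : 0 < μ D) : 0 < μ (D ∩ S) := by
  refine (ae_pos_condExp_indicator_iff (sup_le (hF.trans hmX) hmY) (hmX _ hS)).1 ?_ D hD hμD
  filter_upwards [hpos, condExp_sup_indep_eq hF hmX hmY hind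
    (stronglyMeasurable_const.indicator hS) ((integrable_const (1 : ℝ)).indicator (hmX _ hS))]
    with ω hω hω_eq
  rwa [hω_eq]

end CondExp

section Filtrations

variable {E : Type*} [MeasurableSpace E] {m0 : MeasurableSpace Ω} {X : ℝ → Ω → E}

theorem measurable_processSigma (X : ℝ → Ω → E) (t : ℝ) : Measurable[processSigma X] (X t) :=
  measurable_iff_comap_le.mpr (le_iSup (fun t => MeasurableSpace.comap (X t) inferInstance) t)

theorem processSigma_le (hX : ∀ t, Measurable (X t)) : processSigma X ≤ m0 :=
  iSup_le fun t => (hX t).comap_le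

theorem natFilt_le {m : MeasurableSpace Ω} {t : ℝ} (hX : ∀ s ≤ t, Measurable[m] (X s)) :
    natFilt X t ≤ m :=
  iSup₂_le fun s hs => (hX s hs).comap_le

theorem measurable_natFilt {s t : ℝ} (hst : s ≤ t) : Measurable[natFilt X t] (X s) :=
  measurable_iff_comap_le.mpr
    (le_iSup₂ (f := fun s (_ : s ∈ Iic t) => MeasurableSpace.comap (X s) inferInstance) s hst)

theorem natFilt_le_processSigma (t : ℝ) : natFilt X t ≤ processSigma X :=
  natFilt_le fun s _ => measurable_processSigma X s

theorem natFilt_add_le_sup_processSigma [Add E] [MeasurableAdd₂ E] (X Y : ℝ → Ω → E) (t : ℝ) :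
    natFilt (fun t ω => X t ω + Y t ω) t ≤ natFilt X t ⊔ processSigma Y :=
  natFilt_le fun _ hs => ((measurable_natFilt hs).mono le_sup_left le_rfl).add
    ((measurable_processSigma Y _).mono le_sup_right le_rfl)

end Filtrations

theorem cfs_add_independent_general
    {m0 : MeasurableSpace Ω} (μ : Measure Ω) [IsProbabilityMeasure μ]
    (T : ℝ) (d : ℕ)
    (X Y : ℝ → Ω → EuclideanSpace ℝ (Fin d))
    (hXcont : ∀ ω, Continuous fun t => X t ω)
    (hYcont : ∀ ω, Continuous fun t => Y t ω)
    (hXmeas : ∀ t : ℝ, Measurable (X t))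
    (hYmeas : ∀ t : ℝ, Measurable (Y t))
    (hindep : ProbabilityTheory.Indep (processSigma X) (processSigma Y) μ)
    (hCFS : HasCFS μ T (natFilt X) X) :
    HasCFS μ T (natFilt (fun t ω => X t ω + Y t ω)) (fun t ω => X t ω + Y t ω) := by
  intro t₀ ht₀ f hf hf0 ε hε
  have hle : t₀ ≤ T := ht₀.2.le
  have hmX := processSigma_le hXmeas
  refine (ae_pos_condExp_indicator_iff (natFilt_le fun t _ => (hXmeas t).add (hYmeas t))
    (measurableSet_sbEvent (fun t => (hXmeas t).add (hYmeas t))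
      (fun ω => (hXcont ω).add (hYcont ω)) hle hf ε)).2 fun A hA hμA => ?_
  obtain ⟨g, hg, hg0, hgY⟩ :=
    exists_seq_approx_increments (E := EuclideanSpace ℝ (Fin d)) hle (half_pos hε)
  set C := fun n => sbEvent Y t₀ T (ε / 2) (g n)
  have hcover : ∀ ω, ∃ n, ω ∈ C n := fun ω => hgY _ (hYcont ω).continuousOn
  obtain ⟨n, hn⟩ : ∃ n, 0 < μ (A ∩ C n) :=
    exists_measure_pos_of_not_measure_iUnion_null fun h0 => hμA.ne' <| measure_mono_null
      (fun ω hω => mem_iUnion.mpr ((hcover ω).imp fun _ => And.intro hω)) h0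
  have hC : MeasurableSet[processSigma Y] (C n) :=
    measurableSet_sbEvent (measurable_processSigma Y) hYcont hle (hg n).continuousOn _
  have hSX : MeasurableSet[processSigma X] (sbEvent X t₀ T (ε / 2) (fun t => f t - g n t)) :=
    measurableSet_sbEvent (measurable_processSigma X) hXcont hle (hf.sub (hg n).continuousOn) _
  have hXpos := hCFS t₀ ht₀ _ (hf.sub (hg n).continuousOn) (by simp [hf0, hg0]) _ (half_pos hε)
  have hD : MeasurableSet[natFilt X t₀ ⊔ processSigma Y] (A ∩ C n) :=
    (natFilt_add_le_sup_processSigma X Y t₀ _ hA).inter (le_sup_right (a := natFilt X t₀) _ hC)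
  refine (measure_inter_pos_of_ae_pos_condExp_of_indep (natFilt_le_processSigma t₀) hmX
    (processSigma_le hYmeas) hindep hSX hXpos hD hn).trans_le (measure_mono ?_)
  rintro ω ⟨⟨hωA, hωY⟩, hωX⟩
  have hω := sbEvent_inter_subset_sbEvent_add X Y t₀ T _ _ _ _ ⟨hωX, hωY⟩
  simp only [add_halves, sub_add_cancel] at hω
  exact ⟨hωA, hω⟩

/-- if X has CFS with respect to its natural filtration and Y is an
independent continuous process, then X + Y has CFS with respect to its natural filtration. -/
theorem cfs_add_independent
    {m0 : MeasurableSpace Ω} (μ : Measure Ω) [IsProbabilityMeasure μ]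
    (T : ℝ) (hT : 0 < T) (d : ℕ)
    (X Y : ℝ → Ω → EuclideanSpace ℝ (Fin d))
    (hXcont : ∀ ω, Continuous fun t => X t ω)
    (hYcont : ∀ ω, Continuous fun t => Y t ω)
    (hXmeas : ∀ t : ℝ, Measurable (X t))
    (hYmeas : ∀ t : ℝ, Measurable (Y t))
    (hindep : ProbabilityTheory.Indep (processSigma X) (processSigma Y) μ)
    (hCFS : HasCFS μ T (natFilt X) X) :
    HasCFS μ T (natFilt (fun t ω => X t ω + Y t ω)) (fun t ω => X t ω + Y t ω) :=
  cfs_add_independent_general (m0 := m0) μ T d X Y hXcont hYcont hXmeas hYmeas hindep hCFS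
end
end

section
/- Let $X=(X_t)_{t\in[0,T]}$ be a $d$-dimensional càdlàg $\mathbb{F}$-adapted process that is sticky, and let $f:\mathbb{R}^d\to\mathbb{R}^d$ be a continuous function. Then the process $Y_t=f(X_t)$, $t\in[0,T]$, is also sticky with respect to $\mathbb{F}$. -/
open MeasureTheory ProbabilityTheory Set
noncomputable section
variable {Ω : Type*}

/-- A d-dimensional process is sticky w.r.t. the filtration F. -/
def Sticky {d : ℕ} [MeasurableSpace Ω] (μ : Measure Ω) (T : ℝ) (F : ℝ → MeasurableSpace Ω)
    (X : ℝ → Ω → EuclideanSpace ℝ (Fin d)) : Prop :=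
  ∀ t ∈ Set.Ico (0:ℝ) T, ∀ δ > (0:ℝ), ∀ᵐ ω ∂μ,
    0 < (μ[({ω' | ∀ i, ∀ u ∈ Set.Icc t T, |X u ω' i - X t ω' i| < δ}).indicator
          (fun _ => (1:ℝ)) | F t]) ω

/-!
On the event `{‖X t‖ ≤ n}`, which is `F t`-measurable, uniform continuity of `f` on a compact
ball turns a small oscillation of `X` on `[t, T]` into a small oscillation of `f ∘ X`. Pulling the
indicator of this event out of the conditional expectation transfers the positivity from `X` to
`f ∘ X`, and letting `n → ∞` covers almost every `ω`.

The event that `f ∘ X` stays close to its value at `t` is an uncountable intersection, so it must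
first be shown to be null-measurable. By right continuity its complement is the projection onto
`Ω` of `(K ×ˢ univ) ∩ ⋂ n, ⋃ j, I n j ×ˢ E n j` with `K = [t, T]` compact, `I n j` closed and
`E n j` measurable. Such a projection is null-measurable: bounding the indices `j` greedily, one
coordinate `n` at a time, loses arbitrarily little outer measure, and by compactness the resulting
intersection of measurable finite truncations stays inside the projection.
-/

open Filter Topology Function
open scoped ENNReal

namespace ProjSet

variable {α : Type*} (K : Set α) (I : ℕ → ℕ → Set α) (E : ℕ → ℕ → Set Ω)

def projSet : Set Ω := {ω | ∃ u ∈ K, ∀ n, ∃ j, u ∈ I n j ∧ ω ∈ E n j}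

def projSetBounded (b : ℕ → ℕ) (N : ℕ) : Set Ω :=
  {ω | ∃ u ∈ K, ∀ n, ∃ j, (n < N → j < b n) ∧ u ∈ I n j ∧ ω ∈ E n j}

def projSetTrunc (b : ℕ → ℕ) (N : ℕ) : Set Ω :=
  {ω | ∃ u ∈ K, ∀ n < N, ∃ j < b n, u ∈ I n j ∧ ω ∈ E n j}

variable {K I E}

lemma projSetBounded_zero (b : ℕ → ℕ) : projSetBounded K I E b 0 = projSet K I E := by
  ext ω
  simp [projSetBounded, projSet]

lemma projSetBounded_congr {b b' : ℕ → ℕ} {N : ℕ} (h : ∀ n < N, b n = b' n) :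
    projSetBounded K I E b N = projSetBounded K I E b' N := by
  ext ω
  simp only [projSetBounded]
  refine exists_congr fun u => and_congr_right fun _ => forall_congr' fun n =>
    exists_congr fun j => and_congr_left fun _ => imp_congr_right fun hn => ?_
  rw [h n hn]

lemma projSetBounded_eq_iUnion (b : ℕ → ℕ) (N : ℕ) :
    projSetBounded K I E b N = ⋃ k, projSetBounded K I E (update b N k) (N + 1) := by
  ext ω
  simp only [projSetBounded, mem_iUnion]
  constructor
  · rintro ⟨u, hu, h⟩
    obtain ⟨j₀, -, hj₀⟩ := h N
    refine ⟨j₀ + 1, u, hu, fun n => ?_⟩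
    rcases eq_or_ne n N with rfl | hn
    · exact ⟨j₀, by simp, hj₀⟩
    · obtain ⟨j, hjb, hj⟩ := h n
      exact ⟨j, fun hn' => by rw [update_of_ne hn]; exact hjb (by omega), hj⟩
  · rintro ⟨k, u, hu, h⟩
    refine ⟨u, hu, fun n => ?_⟩
    obtain ⟨j, hjb, hj⟩ := h n
    exact ⟨j, fun hn => by simpa [update_of_ne hn.ne] using hjb (by omega), hj⟩

lemma monotone_projSetBounded_update (b : ℕ → ℕ) (N : ℕ) :
    Monotone fun k => projSetBounded K I E (update b N k) (N + 1) := by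
  rintro k k' hk ω ⟨u, hu, h⟩
  refine ⟨u, hu, fun n => ?_⟩
  obtain ⟨j, hjb, hj⟩ := h n
  exact ⟨j, fun hn => (hjb hn).trans_le (update_mono hk n), hj⟩

lemma projSetBounded_subset_projSetTrunc (b : ℕ → ℕ) (N : ℕ) :
    projSetBounded K I E b N ⊆ projSetTrunc K I E b N := by
  rintro ω ⟨u, hu, h⟩
  refine ⟨u, hu, fun n hn => ?_⟩
  obtain ⟨j, hjb, hj⟩ := h n
  exact ⟨j, hjb hn, hj⟩

lemma measurableSet_projSetTrunc [MeasurableSpace Ω] (hE : ∀ n j, MeasurableSet (E n j)) (b : ℕ → ℕ) (N : ℕ) :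
    MeasurableSet (projSetTrunc K I E b N) := by
  have : projSetTrunc K I E b N = ⋃ (c : Fin N → ℕ)
      (_ : ∃ u ∈ K, ∀ n : Fin N, c n < b n ∧ u ∈ I n (c n)), ⋂ n : Fin N, E n (c n) := by
    ext ω
    simp only [projSetTrunc, mem_iUnion, mem_iInter, exists_prop]
    constructor
    · rintro ⟨u, hu, h⟩
      choose c hcb hcI hcE using fun n : Fin N => h n n.isLt
      exact ⟨c, ⟨u, hu, fun n => ⟨hcb n, hcI n⟩⟩, hcE⟩
    · rintro ⟨c, ⟨u, hu, hc⟩, hcE⟩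
      exact ⟨u, hu, fun n hn => ⟨c ⟨n, hn⟩, (hc ⟨n, hn⟩).1, (hc ⟨n, hn⟩).2, hcE ⟨n, hn⟩⟩⟩
  rw [this]
  exact .iUnion fun c => .iUnion fun _ => .iInter fun n => hE n (c n)

lemma antitone_projSetTrunc (b : ℕ → ℕ) : Antitone (projSetTrunc K I E b) :=
  antitone_nat_of_succ_le fun N _ ⟨u, hu, h⟩ => ⟨u, hu, fun n hn => h n (by omega)⟩

lemma iInter_projSetTrunc_subset [TopologicalSpace α] (hK : IsCompact K)
    (hI : ∀ n j, IsClosed (I n j)) (b : ℕ → ℕ) :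
    ⋂ N, projSetTrunc K I E b N ⊆ projSet K I E := by
  intro ω hω
  rw [mem_iInter] at hω
  let C n := ⋃ j ∈ {j | j < b n ∧ ω ∈ E n j}, I n j
  have hC : ∀ n, IsClosed (C n) := fun n =>
    ((Set.finite_lt_nat (b n)).subset fun j hj => hj.1).isClosed_biUnion fun j _ => hI n j
  obtain ⟨u, hu, huC⟩ := hK.inter_iInter_nonempty C hC fun s => by
    obtain ⟨u, hu, h⟩ := hω (s.sup id + 1)
    refine ⟨u, hu, mem_iInter₂.2 fun n hn => ?_⟩
    obtain ⟨j, hjb, hjI, hjE⟩ := h n (Nat.lt_succ_of_le (s.le_sup (f := id) hn))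
    exact mem_biUnion ⟨hjb, hjE⟩ hjI
  refine ⟨u, hu, fun n => ?_⟩
  obtain ⟨j, ⟨-, hjE⟩, hjI⟩ := mem_iUnion₂.1 (mem_iInter.1 huC n)
  exact ⟨j, hjI, hjE⟩

variable [MeasurableSpace Ω] {μ : Measure Ω} [IsFiniteMeasure μ]

lemma exists_measure_projSetBounded_lt_update {ε : ℝ≥0∞} (hε : ε ≠ 0) (b : ℕ → ℕ) (N : ℕ) :
    ∃ k, μ (projSetBounded K I E b N) < μ (projSetBounded K I E (update b N k) (N + 1)) + ε := by
  have hlim := (tendsto_measure_iUnion_atTop (μ := μ)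
    (monotone_projSetBounded_update (K := K) (I := I) (E := E) b N)).add_const ε
  rw [← projSetBounded_eq_iUnion] at hlim
  exact (hlim.eventually (lt_mem_nhds (ENNReal.lt_add_right (measure_ne_top _ _) hε))).exists

lemma exists_bounds_measure_projSet_le {ε : ℝ≥0∞} (hε : ε ≠ 0) :
    ∃ b : ℕ → ℕ, ∀ N, μ (projSet K I E) ≤ μ (projSetBounded K I E b N) + ε := by
  obtain ⟨ε', hε'pos, hε'sum⟩ := ENNReal.exists_pos_sum_of_countable hε ℕ
  choose k hk using fun b N => exists_measure_projSetBounded_lt_update (μ := μ) (K := K)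
    (I := I) (E := E) (ENNReal.coe_ne_zero.2 (hε'pos N).ne') b N
  let Φ : ℕ → ℕ → ℕ := fun N => Nat.rec (fun _ => 0) (fun M φ => update φ M (k φ M)) N
  have hΦ : ∀ n M, n < M → Φ M n = Φ (n + 1) n := by
    intro n
    refine Nat.le_induction rfl fun M hM ih => ?_
    rw [← ih]
    exact update_of_ne (by omega) _ _
  have hcongr : ∀ N, projSetBounded K I E (fun n => Φ (n + 1) n) N
      = projSetBounded K I E (Φ N) N := fun N =>
    projSetBounded_congr fun n hn => (hΦ n N hn).symm
  have hchain : ∀ N, μ (projSet K I E)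
      ≤ μ (projSetBounded K I E (Φ N) N) + ∑ m ∈ Finset.range N, (ε' m : ℝ≥0∞) := by
    intro N
    induction N with
    | zero => simp [projSetBounded_zero]
    | succ N ih =>
      calc μ (projSet K I E)
          ≤ μ (projSetBounded K I E (Φ N) N) + ∑ m ∈ Finset.range N, (ε' m : ℝ≥0∞) := ih
        _ ≤ μ (projSetBounded K I E (Φ (N + 1)) (N + 1)) + ε' N
              + ∑ m ∈ Finset.range N, (ε' m : ℝ≥0∞) := by gcongr; exact (hk _ _).le
        _ = _ := by rw [Finset.sum_range_succ]; ring
  refine ⟨fun n => Φ (n + 1) n, fun N => ?_⟩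
  calc μ (projSet K I E)
      ≤ μ (projSetBounded K I E (Φ N) N) + ∑ m ∈ Finset.range N, (ε' m : ℝ≥0∞) := hchain N
    _ ≤ μ (projSetBounded K I E (fun n => Φ (n + 1) n) N) + ε := by
      rw [hcongr]
      gcongr
      exact (ENNReal.sum_le_tsum _).trans hε'sum.le

lemma exists_measurableSet_subset_projSet [TopologicalSpace α] (hK : IsCompact K)
    (hI : ∀ n j, IsClosed (I n j)) (hE : ∀ n j, MeasurableSet (E n j))
    {ε : ℝ≥0∞} (hε : ε ≠ 0) :
    ∃ G ⊆ projSet K I E, MeasurableSet G ∧ μ (projSet K I E) ≤ μ G + ε := by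
  obtain ⟨b, hb⟩ := exists_bounds_measure_projSet_le (μ := μ) (K := K) (I := I) (E := E) hε
  refine ⟨⋂ N, projSetTrunc K I E b N, iInter_projSetTrunc_subset hK hI b,
    .iInter fun N => measurableSet_projSetTrunc hE b N, ?_⟩
  rw [(antitone_projSetTrunc b).measure_iInter
      (fun N => (measurableSet_projSetTrunc hE b N).nullMeasurableSet) ⟨0, measure_ne_top _ _⟩,
    ENNReal.iInf_add]
  exact le_iInf fun N => (hb N).trans (by gcongr; exact projSetBounded_subset_projSetTrunc b N)

end ProjSet

lemma nullMeasurableSet_of_forall_exists_measurableSet_subset [MeasurableSpace Ω]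
    {μ : Measure Ω} [IsFiniteMeasure μ] {s : Set Ω}
    (h : ∀ ε : ℝ≥0∞, ε ≠ 0 → ∃ t ⊆ s, MeasurableSet t ∧ μ s ≤ μ t + ε) :
    NullMeasurableSet s μ := by
  choose t hts ht hμt using fun n : ℕ => h (n : ℝ≥0∞)⁻¹ (ENNReal.inv_ne_zero.2 (by simp))
  have hle : μ s ≤ μ (⋃ n, t n) := by
    refine ENNReal.le_of_forall_pos_le_add fun ε hε _ => ?_
    obtain ⟨n, hn⟩ := ENNReal.exists_inv_nat_lt (a := ε) (by simpa using hε.ne')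
    calc μ s ≤ μ (t n) + (n : ℝ≥0∞)⁻¹ := hμt n
      _ ≤ μ (⋃ n, t n) + ε := add_le_add (measure_mono (subset_iUnion t n)) hn.le
  exact (MeasurableSet.iUnion ht).nullMeasurableSet.congr <|
    ae_eq_of_subset_of_measure_ge (iUnion_subset hts) hle
      (MeasurableSet.iUnion ht).nullMeasurableSet (measure_ne_top _ _)

namespace ProjSet

variable {α : Type*} [TopologicalSpace α] [MeasurableSpace Ω] {μ : Measure Ω} [IsFiniteMeasure μ]
  {K : Set α} {I : ℕ → ℕ → Set α} {E : ℕ → ℕ → Set Ω}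

theorem nullMeasurableSet_projSet (hK : IsCompact K) (hI : ∀ n j, IsClosed (I n j))
    (hE : ∀ n j, MeasurableSet (E n j)) : NullMeasurableSet (projSet K I E) μ :=
  nullMeasurableSet_of_forall_exists_measurableSet_subset fun _ hε =>
    exists_measurableSet_subset_projSet hK hI hE hε

end ProjSet

open ProjSet

lemma setOf_exists_le_eq_projSet {K : Set ℝ} {g : ℝ → Ω → ℝ}
    (hg : ∀ ω u, ContinuousWithinAt (g · ω) (Ici u) u) {q : ℕ → ℝ} (hq : DenseRange q) (c : ℝ) :
    {ω | ∃ u ∈ K, c ≤ g u ω} =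
      projSet K (fun n j => Icc (q j - 1 / (n + 1)) (q j))
        (fun n j => {ω | c - 1 / (n + 1) < g (q j) ω}) := by
  have hpos : ∀ n : ℕ, (0 : ℝ) < 1 / (n + 1) := fun n => by positivity
  ext ω
  simp only [projSet, mem_ofPred_eq, mem_Icc]
  constructor
  · rintro ⟨u, hu, hcu⟩
    refine ⟨u, hu, fun n => ?_⟩
    obtain ⟨v, huv, hv⟩ := mem_nhdsGE_iff_exists_Ico_subset.1
      ((hg ω u).eventually (eventually_gt_nhds (by linarith [hpos n] : c - 1 / (n + 1) < g u ω)))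
    obtain ⟨_, ⟨j, rfl⟩, hju, hjv⟩ :=
      hq.exists_between (lt_min huv (by linarith [hpos n] : u < u + 1 / (n + 1)))
    have hj := lt_min_iff.1 hjv
    exact ⟨j, ⟨by linarith, hju.le⟩, hv ⟨hju.le, hj.1⟩⟩
  · rintro ⟨u, hu, h⟩
    choose j hjI hjE using h
    have hqj : Tendsto (fun n => q (j n)) atTop (𝓝[≥] u) := by
      refine tendsto_nhdsWithin_of_tendsto_nhds_of_eventually_within _ ?_
        (.of_forall fun n => (hjI n).2)
      refine tendsto_of_tendsto_of_tendsto_of_le_of_le tendsto_const_nhds ?_ (fun n => (hjI n).2)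
        fun n => (by linarith [(hjI n).1] : q (j n) ≤ u + 1 / (n + 1))
      simpa using tendsto_one_div_add_atTop_nhds_zero_nat.const_add u
    refine ⟨u, hu, le_of_tendsto_of_tendsto' ?_ ((hg ω u).tendsto.comp hqj) fun n => (hjE n).le⟩
    simpa using tendsto_one_div_add_atTop_nhds_zero_nat.const_sub c

theorem nullMeasurableSet_setOf_exists_le [MeasurableSpace Ω] {μ : Measure Ω} [IsFiniteMeasure μ]
    {K : Set ℝ} (hK : IsCompact K) {g : ℝ → Ω → ℝ}
    (hg : ∀ ω u, ContinuousWithinAt (g · ω) (Ici u) u) (hgm : ∀ u, Measurable (g u)) (c : ℝ) :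
    NullMeasurableSet {ω | ∃ u ∈ K, c ≤ g u ω} μ := by
  obtain ⟨q, hq⟩ := TopologicalSpace.exists_dense_seq ℝ
  rw [setOf_exists_le_eq_projSet hg hq]
  exact nullMeasurableSet_projSet hK (fun _ _ => isClosed_Icc)
    fun _ _ => measurableSet_lt measurable_const (hgm _)

section Sticky

variable {ι : Type*} [Fintype ι]

def stickyEvent (Z : ℝ → Ω → EuclideanSpace ℝ ι) (t T δ : ℝ) : Set Ω :=
  {ω | ∀ i, ∀ u ∈ Icc t T, |Z u ω i - Z t ω i| < δ}

theorem nullMeasurableSet_stickyEvent [MeasurableSpace Ω] {μ : Measure Ω} [IsFiniteMeasure μ]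
    {Z : ℝ → Ω → EuclideanSpace ℝ ι} (hZ : ∀ ω u, ContinuousWithinAt (Z · ω) (Ici u) u)
    (hZm : ∀ u, Measurable (Z u)) (t T δ : ℝ) :
    NullMeasurableSet (stickyEvent Z t T δ) μ := by
  have hcompl : stickyEvent Z t T δ = (⋃ i, {ω | ∃ u ∈ Icc t T, δ ≤ |Z u ω i - Z t ω i|})ᶜ := by
    ext ω
    simp [stickyEvent]
  rw [hcompl]
  refine (NullMeasurableSet.iUnion fun i => nullMeasurableSet_setOf_exists_le isCompact_Icc
    (fun ω u => ?_) (fun u => ?_) δ).compl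
  · exact ((EuclideanSpace.proj i).continuous.continuousAt.comp_continuousWithinAt
      (hZ ω u)).sub continuousWithinAt_const |>.abs
  · have hproj := (EuclideanSpace.proj (𝕜 := ℝ) i).continuous.measurable
    exact ((hproj.comp (hZm u)).sub (hproj.comp (hZm t))).abs

lemma exists_stickyEvent_subset {K : Set (EuclideanSpace ℝ ι)} (hK : IsCompact K)
    {f : EuclideanSpace ℝ ι → EuclideanSpace ℝ ι} (hf : Continuous f) {δ : ℝ} (hδ : 0 < δ) :
    ∃ δ' > 0, ∀ (Z : ℝ → Ω → EuclideanSpace ℝ ι) (t T : ℝ),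
      {ω | Z t ω ∈ K} ∩ stickyEvent Z t T δ' ⊆ stickyEvent (fun u ω => f (Z u ω)) t T δ := by
  obtain ⟨η, hη, hfη⟩ := Metric.mem_uniformity_dist.1 <|
    hK.uniformContinuousAt_of_continuousAt f (fun x _ => hf.continuousAt)
      (Metric.dist_mem_uniformity hδ)
  obtain ⟨δ', hδ', hδ'η⟩ := Metric.uniformContinuous_iff.1 (PiLp.uniformContinuous_toLp 2 fun _ : ι => ℝ) η hη
  refine ⟨δ', hδ', fun Z t T ω ⟨hωK, hω⟩ i u hu => ?_⟩
  have hclose : dist (Z t ω) (Z u ω) < η := by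
    simpa using hδ'η ((dist_pi_lt_iff hδ').2 fun j => by
      simpa [Real.dist_eq, abs_sub_comm] using hω j u hu)
  calc |f (Z u ω) i - f (Z t ω) i| = dist (f (Z t ω) i) (f (Z u ω) i) := by
        rw [Real.dist_eq, abs_sub_comm]
    _ ≤ dist (f (Z t ω)) (f (Z u ω)) := PiLp.dist_apply_le _ _ _
    _ < δ := hfη hclose hωK

end Sticky

lemma integrable_of_ae_pos_condExp {m m0 : MeasurableSpace Ω} {μ : Measure Ω} [NeZero μ]
    {g : Ω → ℝ} (h : ∀ᵐ ω ∂μ, 0 < μ[g | m] ω) : Integrable g μ := by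
  by_contra hg
  rw [condExp_of_not_integrable hg] at h
  simpa using h.exists

lemma ae_condExp_indicator_le_of_inter_subset {m m0 : MeasurableSpace Ω} {μ : Measure Ω}
    [IsFiniteMeasure μ] {A B C : Set Ω} (hA : Integrable (A.indicator fun _ => (1 : ℝ)) μ)
    (hB : NullMeasurableSet B μ) (hC : MeasurableSet[m] C) (hm : m ≤ m0) (hABC : C ∩ A ⊆ B) :
    ∀ᵐ ω ∂μ, ω ∈ C →
      μ[A.indicator (fun _ => (1 : ℝ)) | m] ω ≤ μ[B.indicator (fun _ => (1 : ℝ)) | m] ω := by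
  have hCA : C.indicator (A.indicator fun _ => (1 : ℝ)) ≤ B.indicator fun _ => 1 := by
    rw [indicator_indicator]
    exact indicator_le_indicator_of_subset hABC fun _ => zero_le_one
  filter_upwards [condExp_indicator (m := m) hA hC,
    condExp_mono (m := m) (hA.indicator (hm C hC)) ((integrable_const 1).indicator₀ hB)
      (.of_forall hCA)] with ω hcond hmono hωC
  rw [← indicator_of_mem hωC (μ[A.indicator fun _ => (1 : ℝ) | m]), ← hcond]
  exact hmono

theorem sticky_comp_continuous_general
    {m0 : MeasurableSpace Ω} (μ : Measure Ω) [IsProbabilityMeasure μ]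
    (T : ℝ) (d : ℕ)
    (F : MeasureTheory.Filtration ℝ m0)
    (X : ℝ → Ω → EuclideanSpace ℝ (Fin d))
    (hXcadlag_r : ∀ ω t, ContinuousWithinAt (fun s => X s ω) (Set.Ici t) t)
    (hXadapted : ∀ t : ℝ, Measurable[F t] (X t))
    (hXsticky : Sticky μ T (fun t => F t) X)
    (f : EuclideanSpace ℝ (Fin d) → EuclideanSpace ℝ (Fin d))
    (hf : Continuous f) :
    Sticky μ T (fun t => F t) (fun t ω => f (X t ω)) := by
  intro t ht δ hδ
  have hXm : ∀ u, Measurable (X u) := fun u => (hXadapted u).mono (F.le u) le_rfl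
  have hB : NullMeasurableSet (stickyEvent (fun u ω => f (X u ω)) t T δ) μ :=
    nullMeasurableSet_stickyEvent (fun ω u => hf.continuousAt.comp_continuousWithinAt
      (hXcadlag_r ω u)) (fun u => hf.measurable.comp (hXm u)) t T δ
  have hlocal : ∀ n : ℕ, ∀ᵐ ω ∂μ, X t ω ∈ Metric.closedBall 0 n →
      0 < μ[(stickyEvent (fun u ω => f (X u ω)) t T δ).indicator (fun _ => (1 : ℝ)) | F t] ω := by
    intro n
    obtain ⟨δ', hδ', hsub⟩ := exists_stickyEvent_subset (isCompact_closedBall 0 (n : ℝ)) hf hδ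
    have hpos := hXsticky t ht δ' hδ'
    filter_upwards [hpos, ae_condExp_indicator_le_of_inter_subset
      (integrable_of_ae_pos_condExp hpos) hB (hXadapted t measurableSet_closedBall) (F.le t)
      (hsub X t T)] with ω hω hle hωn
    exact hω.trans_le (hle hωn)
  filter_upwards [ae_all_iff.2 hlocal] with ω hω
  exact hω ⌈‖X t ω‖⌉₊ (mem_closedBall_zero_iff.2 (Nat.le_ceil _))

/-- stickiness is preserved by a continuous transformation of a càdlàg
adapted process. -/
theorem sticky_comp_continuous
    {m0 : MeasurableSpace Ω} (μ : Measure Ω) [IsProbabilityMeasure μ]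
    (T : ℝ) (hT : 0 < T) (d : ℕ)
    (F : MeasureTheory.Filtration ℝ m0)
    (X : ℝ → Ω → EuclideanSpace ℝ (Fin d))
    (hXcadlag_r : ∀ ω t, ContinuousWithinAt (fun s => X s ω) (Set.Ici t) t)
    (hXcadlag_l : ∀ ω t, ∃ L, Filter.Tendsto (fun s => X s ω) (nhdsWithin t (Set.Iio t)) (nhds L))
    (hXadapted : ∀ t : ℝ, Measurable[F t] (X t))
    (hXsticky : Sticky μ T (fun t => F t) X)
    (f : EuclideanSpace ℝ (Fin d) → EuclideanSpace ℝ (Fin d))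
    (hf : Continuous f) :
    Sticky μ T (fun t => F t) (fun t ω => f (X t ω)) :=
  sticky_comp_continuous_general μ T d F X hXcadlag_r hXadapted hXsticky f hf
end
end

section
/- Suppose the $d$-dimensional càdlàg adapted price process $S=(S_t)_{t\in[0,T]}$ satisfies the joint $\mathbb{F}$-CUD condition with respect to the Cheridito class $\mathcal{L}(\mathbb{F})$. Then $S$ admits no arbitrage in the Cheridito class: there is no simple strategy $\Phi$ with minimal waiting time $h>0$ between rebalancing times such that the terminal value $V_T(\Phi;0)$ of the self-financing portfolio with zero initial capital satisfies $P(V_T(\Phi;0)\ge0)=1$ and $P(V_T(\Phi;0)>0)>0$. -/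
open MeasureTheory ProbabilityTheory Set
noncomputable section
variable {Ω : Type*}

/-- The joint conditional up-and-down (CUD) condition with respect to the Cheridito class. -/
def JointCUD {d : ℕ} {mΩ : MeasurableSpace Ω} (μ : Measure Ω) (T : ℝ)
    (F : MeasureTheory.Filtration ℝ mΩ) (X : ℝ → Ω → EuclideanSpace ℝ (Fin d)) : Prop :=
  ∀ h ∈ Set.Ioo (0:ℝ) T, ∀ τ₁ τ₂ : Ω → ℝ,
    ∀ hτ₁ : IsStoppingTime F (fun ω => (τ₁ ω : WithTop ℝ)),
      IsStoppingTime F (fun ω => (τ₂ ω : WithTop ℝ)) →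
    (∀ ω, τ₁ ω ∈ Set.Icc 0 T) → (∀ ω, τ₂ ω ∈ Set.Icc 0 T) →
    (∀ ω, τ₁ ω ≤ τ₂ ω) → (∀ᵐ ω ∂μ, τ₁ ω + h ≤ τ₂ ω) →
    ∀ B : Set Ω, MeasurableSet[hτ₁.measurableSpace] B → 0 < μ B →
    ∀ α : Fin d → Bool,
      {k : Fin d | 0 < μ ({ω | X (τ₁ ω) ω k ≠ X (τ₂ ω) ω k} ∩ B)}.Nonempty →
      0 < μ ((⋂ k ∈ {k : Fin d | 0 < μ ({ω | X (τ₁ ω) ω k ≠ X (τ₂ ω) ω k} ∩ B)},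
        (if α k then {ω | X (τ₁ ω) ω k < X (τ₂ ω) ω k}
         else {ω | X (τ₂ ω) ω k < X (τ₁ ω) ω k})) ∩ B)

open scoped RealInnerProductSpace

/-!
Fix one trading period `(τ, τ']` with an `F_τ`-measurable position `ψ`. Split any `F_τ`-event
into countably many pieces on which the signs of the coordinates of `ψ` are fixed and `τ` stays
a fixed distance below `T`. On such a piece the joint CUD condition, applied with the signs
opposite to those of `ψ`, makes all coordinates that move at all move against `ψ` simultaneously
on a non-null event, where the gain of the period is therefore negative. Hence a
one-period gain that is a.e. nonnegative on an `F_τ`-event vanishes a.e. there.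

Over several periods one argues by induction: if the value `V` before the last period were
negative with positive probability, the last gain would be a.e. positive on the `F_τ`-event
`{V < 0}`, which the one-period statement forbids; so `V ≥ 0` a.e., hence `V = 0` a.e. by
induction, and then the last gain is a.e. nonnegative and thus a.e. zero. Right-continuity of
`S` is what makes `S` at stopping times measurable with respect to the stopped σ-algebras.
-/

open Filter Topology TopologicalSpace

lemma tendsto_ceil_mul_div_nhdsWithin_Ici (s : ℝ) :
    Tendsto (fun n : ℕ => (⌈s * (n + 1)⌉ : ℝ) / (n + 1)) atTop (𝓝[≥] s) := by
  have hpos (n : ℕ) : (0 : ℝ) < n + 1 := n.cast_add_one_pos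
  have hge (n : ℕ) : s ≤ (⌈s * (n + 1)⌉ : ℝ) / (n + 1) :=
    (le_div_iff₀ (hpos n)).2 (Int.le_ceil _)
  have hle (n : ℕ) : (⌈s * (n + 1)⌉ : ℝ) / (n + 1) ≤ s + 1 / (n + 1) := by
    rw [div_le_iff₀ (hpos n), add_mul, one_div_mul_cancel (hpos n).ne']
    exact (Int.ceil_lt_add_one _).le
  refine tendsto_nhdsWithin_of_tendsto_nhds_of_eventually_within _ ?_ (.of_forall hge)
  refine tendsto_of_tendsto_of_tendsto_of_le_of_le tendsto_const_nhds ?_ hge hle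
  simpa using tendsto_const_nhds.add (tendsto_one_div_add_atTop_nhds_zero_nat (𝕜 := ℝ))

theorem MeasureTheory.isStronglyProgressive_of_continuousWithinAt_Ici {mΩ : MeasurableSpace Ω}
    {E : Type*} [TopologicalSpace E] [PseudoMetrizableSpace E] [SecondCountableTopology E]
    [MeasurableSpace E] [OpensMeasurableSpace E] {F : Filtration ℝ mΩ} {u : ℝ → Ω → E}
    (hu : ∀ t, Measurable[F t] (u t))
    (hu_rc : ∀ ω t, ContinuousWithinAt (fun s => u s ω) (Ici t) t) :
    IsStronglyProgressive F u := by
  intro i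
  -- approximate `u` on `Iic i` by its values at the grid points `k / (n + 1)`, clipped at `i`
  let grid (n : ℕ) (s : ℝ) : ℝ := min i ((⌈s * (n + 1)⌉ : ℝ) / (n + 1))
  have hgrid (n : ℕ) : StronglyMeasurable[Subtype.instMeasurableSpace.prod (F i)]
      fun p : Iic i × Ω => u (grid n p.1) p.2 := by
    have hgridval : Measurable[(F i).prod (inferInstance : MeasurableSpace ℤ)]
        fun q : Ω × ℤ => u (min i (q.2 / (n + 1))) q.1 :=
      measurable_from_prod_countable_left fun k =>
        (hu (min i (k / (n + 1)))).mono (F.mono (min_le_left _ _)) le_rfl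
    have hceil : @Measurable (Iic i × Ω) (Ω × ℤ) (Subtype.instMeasurableSpace.prod (F i))
        ((F i).prod inferInstance) fun p => (p.2, ⌈(p.1 : ℝ) * (n + 1)⌉) :=
      (@measurable_snd _ _ Subtype.instMeasurableSpace (F i)).prodMk
        (Int.measurable_ceil.comp ((measurable_subtype_coe.comp
          (@measurable_fst _ _ Subtype.instMeasurableSpace (F i))).mul_const _))
    exact (hgridval.comp hceil).stronglyMeasurable
  refine stronglyMeasurable_of_tendsto atTop hgrid (tendsto_pi_nhds.2 ?_)
  rintro ⟨s, ω⟩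
  have hs : (s : ℝ) ≤ i := s.2
  have hlim : Tendsto (fun n => grid n s) atTop (𝓝[≥] (s : ℝ)) := by
    obtain ⟨hconv, hge⟩ := tendsto_nhdsWithin_iff.1 (tendsto_ceil_mul_div_nhdsWithin_Ici (s : ℝ))
    refine tendsto_nhdsWithin_of_tendsto_nhds_of_eventually_within _ ?_ ?_
    · simpa [min_eq_right hs] using (tendsto_const_nhds (x := i)).min hconv
    · exact hge.mono fun n hn => le_min hs hn
  exact (hu_rc ω s).tendsto.comp hlim

theorem MeasureTheory.IsStronglyProgressive.measurable_min_const_of_le {mΩ : MeasurableSpace Ω}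
    {E : Type*} [TopologicalSpace E] [PseudoMetrizableSpace E] [MeasurableSpace E] [BorelSpace E]
    {F : Filtration ℝ mΩ} {u : ℝ → Ω → E} (hu : IsStronglyProgressive F u) {τ σ : Ω → ℝ}
    (hτ : IsStoppingTime F fun ω => (τ ω : WithTop ℝ))
    (hσ : IsStoppingTime F fun ω => (σ ω : WithTop ℝ)) (hτσ : ∀ ω, τ ω ≤ σ ω) (T : ℝ) :
    Measurable[hσ.measurableSpace] fun ω => u (min T (τ ω)) ω := by
  have hτT := hτ.min_const T
  have hval : (fun ω => u (min T (τ ω)) ω) = stoppedValue u fun ω => min (τ ω : WithTop ℝ) T := by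
    ext ω
    rw [min_comm]
    rfl
  rw [hval]
  exact (measurable_stoppedValue hu hτT).mono
    (hτT.measurableSpace_mono hσ fun ω => min_le_of_left_le (WithTop.coe_le_coe.2 (hτσ ω))) le_rfl

def NoConditionalArbitrage {mΩ : MeasurableSpace Ω} (μ : Measure Ω) (𝒢 : MeasurableSpace Ω)
    (X : Ω → ℝ) : Prop :=
  ∀ G, MeasurableSet[𝒢] G → (∀ᵐ ω ∂μ, ω ∈ G → 0 ≤ X ω) → ∀ᵐ ω ∂μ, ω ∈ G → X ω = 0

theorem ae_sum_eq_zero_of_noConditionalArbitrage {mΩ : MeasurableSpace Ω} {μ : Measure Ω}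
    {n : ℕ} {𝒢 : Fin n → MeasurableSpace Ω} {X : Fin n → Ω → ℝ}
    (hmeas : ∀ i j, i < j → Measurable[𝒢 j] (X i))
    (hX : ∀ j, NoConditionalArbitrage μ (𝒢 j) (X j))
    (hnonneg : ∀ᵐ ω ∂μ, 0 ≤ ∑ j, X j ω) : ∀ᵐ ω ∂μ, ∑ j, X j ω = 0 := by
  induction n with
  | zero => simp
  | succ n ih =>
    simp only [Fin.sum_univ_castSucc] at hnonneg ⊢
    set V := fun ω => ∑ i : Fin n, X i.castSucc ω
    have hV : Measurable[𝒢 (Fin.last n)] V :=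
      Finset.measurable_sum _ fun i _ => hmeas _ _ (Fin.castSucc_lt_last i)
    have hV_nonneg : ∀ᵐ ω ∂μ, 0 ≤ V ω := by
      have hlast := hX (Fin.last n) _ (hV measurableSet_Iio) <| by
        filter_upwards [hnonneg] with ω hω (hVω : V ω < 0)
        linarith
      filter_upwards [hnonneg, hlast] with ω hω hlastω
      by_contra hVω
      linarith [hlastω (not_le.1 hVω)]
    have hV0 : ∀ᵐ ω ∂μ, V ω = 0 :=
      ih (fun i j hij => hmeas _ _ (Fin.castSucc_lt_castSucc_iff.2 hij)) (fun j => hX _)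
        hV_nonneg
    have hlast0 := hX (Fin.last n) univ MeasurableSet.univ <| by
      filter_upwards [hnonneg, hV0] with ω hω hVω _
      linarith
    filter_upwards [hV0, hlast0] with ω hVω hlastω
    change V ω + X (Fin.last n) ω = 0
    rw [hVω, hlastω (mem_univ ω), add_zero]

theorem mul_sub_neg_of_mem_ite {p a c : ℝ} {b : Bool} (hp : p ∈ if b then Iic 0 else Ioi 0)
    (hp0 : p ≠ 0) (hac : if b then a < c else c < a) : p * (c - a) < 0 := by
  cases b
  · simp only [Bool.false_eq_true, if_false, mem_Ioi] at hp hac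
    exact mul_neg_of_pos_of_neg hp (by linarith)
  · simp only [if_true, mem_Iic] at hp hac
    exact mul_neg_of_neg_of_pos (lt_of_le_of_ne hp hp0) (by linarith)

theorem EuclideanSpace.real_inner_eq_sum {ι : Type*} [Fintype ι] (x y : EuclideanSpace ℝ ι) :
    ⟪x, y⟫ = ∑ k, x k * y k := by
  simp [PiLp.inner_apply, mul_comm]

theorem EuclideanSpace.exists_ne_zero_of_real_inner_ne_zero {ι : Type*} [Fintype ι]
    {x y : EuclideanSpace ℝ ι} (h : ⟪x, y⟫ ≠ 0) : ∃ k, x k ≠ 0 ∧ y k ≠ 0 := by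
  rw [EuclideanSpace.real_inner_eq_sum] at h
  obtain ⟨k, -, hk⟩ := Finset.exists_ne_zero_of_sum_ne_zero h
  exact ⟨k, mul_ne_zero_iff.1 hk⟩

section JointCUD

variable {d : ℕ} {mΩ : MeasurableSpace Ω} {μ : Measure Ω} {T : ℝ} {F : Filtration ℝ mΩ}
  {S : ℝ → Ω → EuclideanSpace ℝ (Fin d)}

theorem JointCUD.measure_inner_neg_inter_pos (hCUD : JointCUD μ T F S) {ε : ℝ}
    (hε : ε ∈ Ioo 0 T) {τ₁ τ₂ : Ω → ℝ}
    (hτ₁ : IsStoppingTime F fun ω => (τ₁ ω : WithTop ℝ))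
    (hτ₂ : IsStoppingTime F fun ω => (τ₂ ω : WithTop ℝ))
    (hτ₁T : ∀ ω, τ₁ ω ∈ Icc 0 T) (hτ₂T : ∀ ω, τ₂ ω ∈ Icc 0 T) (hgap : ∀ ω, τ₁ ω + ε ≤ τ₂ ω)
    {B : Set Ω} (hB : MeasurableSet[hτ₁.measurableSpace] B)
    {ψ : Ω → EuclideanSpace ℝ (Fin d)} {α : Fin d → Bool}
    (hψ : ∀ ω ∈ B, ∀ k, ψ ω k ∈ if α k then Iic 0 else Ioi 0) {k₀ : Fin d}
    (hψk₀ : ∀ ω ∈ B, ψ ω k₀ ≠ 0) (hk₀ : 0 < μ ({ω | S (τ₁ ω) ω k₀ ≠ S (τ₂ ω) ω k₀} ∩ B)) :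
    0 < μ ({ω | ⟪ψ ω, S (τ₂ ω) ω - S (τ₁ ω) ω⟫ < 0} ∩ B) := by
  set I := {k : Fin d | 0 < μ ({ω | S (τ₁ ω) ω k ≠ S (τ₂ ω) ω k} ∩ B)}
  -- with `α` opposite to the signs of `ψ`, every coordinate moving on `B` moves against `ψ`
  have hupdown := hCUD ε hε τ₁ τ₂ hτ₁ hτ₂ hτ₁T hτ₂T (fun ω => by linarith [hgap ω, hε.1])
    (.of_forall hgap) B hB (hk₀.trans_le (measure_mono inter_subset_right)) α ⟨k₀, hk₀⟩
  have hflat : ∀ᵐ ω ∂μ, ∀ k, k ∉ I → ω ∈ B → S (τ₁ ω) ω k = S (τ₂ ω) ω k := by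
    refine ae_all_iff.2 fun k => ?_
    by_cases hk : k ∈ I
    · exact .of_forall fun _ h => absurd hk h
    · filter_upwards [measure_eq_zero_iff_ae_notMem.1 (nonpos_iff_eq_zero.1 (not_lt.1 hk))]
        with ω hω _ hωB
      by_contra hne
      exact hω ⟨hne, hωB⟩
  refine hupdown.trans_le (measure_mono_ae ?_)
  filter_upwards [hflat] with ω hω ⟨hωI, hωB⟩
  refine ⟨?_, hωB⟩
  have hterm (k : Fin d) (hk : ψ ω k ≠ 0) (hkI : k ∈ I) :
      ψ ω k * (S (τ₂ ω) ω k - S (τ₁ ω) ω k) < 0 := by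
    refine mul_sub_neg_of_mem_ite (hψ ω hωB k) hk ?_
    have := mem_iInter₂.1 hωI k hkI
    split_ifs at this ⊢ <;> exact this
  have hterm_le (k : Fin d) : ψ ω k * (S (τ₂ ω) ω k - S (τ₁ ω) ω k) ≤ 0 := by
    by_cases hk : ψ ω k = 0
    · simp [hk]
    by_cases hkI : k ∈ I
    · exact (hterm k hk hkI).le
    · simp [hω k hkI hωB]
  show ⟪ψ ω, S (τ₂ ω) ω - S (τ₁ ω) ω⟫ < 0
  calc ⟪ψ ω, S (τ₂ ω) ω - S (τ₁ ω) ω⟫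
      = ∑ k, ψ ω k * (S (τ₂ ω) ω k - S (τ₁ ω) ω k) := by
        simp [EuclideanSpace.real_inner_eq_sum]
    _ < ∑ _k : Fin d, (0 : ℝ) :=
        Finset.sum_lt_sum (fun k _ => hterm_le k) ⟨k₀, Finset.mem_univ _, hterm k₀ (hψk₀ ω hωB) hk₀⟩
    _ = 0 := Finset.sum_const_zero

theorem JointCUD.measure_inner_neg_inter_pos_of_le (hCUD : JointCUD μ T F S) {τ τ' : Ω → ℝ}
    (hτ : IsStoppingTime F fun ω => (τ ω : WithTop ℝ))
    (hτ' : IsStoppingTime F fun ω => (τ' ω : WithTop ℝ)) (hτ0 : ∀ ω, 0 ≤ τ ω) {h : ℝ}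
    (hh : 0 < h) (hgap : ∀ ω, τ ω + h ≤ τ' ω) {c : ℝ} (hc : c ∈ Ico 0 T) {B : Set Ω}
    (hB : MeasurableSet[hτ.measurableSpace] B) (hBc : ∀ ω ∈ B, τ ω ≤ c)
    {ψ : Ω → EuclideanSpace ℝ (Fin d)} {α : Fin d → Bool}
    (hψ : ∀ ω ∈ B, ∀ k, ψ ω k ∈ if α k then Iic 0 else Ioi 0) {k₀ : Fin d}
    (hψk₀ : ∀ ω ∈ B, ψ ω k₀ ≠ 0)
    (hk₀ : 0 < μ ({ω | S (min T (τ ω)) ω k₀ ≠ S (min T (τ' ω)) ω k₀} ∩ B)) :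
    0 < μ ({ω | ⟪ψ ω, S (min T (τ' ω)) ω - S (min T (τ ω)) ω⟫ < 0} ∩ B) := by
  obtain ⟨hc0, hcT⟩ := hc
  -- stopping `τ` at `c` leaves it unchanged on `B` and makes the gap to `min T τ'` uniform
  have hτ₁ : IsStoppingTime F fun ω => ((min (τ ω) c : ℝ) : WithTop ℝ) := hτ.min_const c
  have hτ₂ : IsStoppingTime F fun ω => ((min T (τ' ω) : ℝ) : WithTop ℝ) :=
    (isStoppingTime_const F T).min hτ'
  have hτ₁B (ω : Ω) (hω : ω ∈ B) : min (τ ω) c = min T (τ ω) := by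
    rw [min_eq_left (hBc ω hω), min_eq_right ((hBc ω hω).trans hcT.le)]
  have hBc' : MeasurableSet[F c] B := by
    have := ((hτ.measurableSet B).1 hB).2 c
    convert this using 1
    exact (inter_eq_left.2 fun ω hω => WithTop.coe_le_coe.2 (hBc ω hω)).symm
  obtain ⟨ε, hε, hεh, hεc⟩ : ∃ ε, 0 < ε ∧ ε ≤ h ∧ ε < T - c :=
    ⟨min h (T - c) / 2, by positivity, by linarith [min_le_left h (T - c)],
      by linarith [min_le_right h (T - c)]⟩
  refine (hCUD.measure_inner_neg_inter_pos ⟨hε, by linarith⟩ hτ₁ hτ₂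
    (fun ω => ⟨le_min (hτ0 ω) hc0, (min_le_right _ _).trans hcT.le⟩)
    (fun ω => ⟨le_min (hc0.trans hcT.le) (by linarith [hτ0 ω, hgap ω]), min_le_left _ _⟩)
    (fun ω => le_min (by linarith [min_le_right (τ ω) c])
      (by linarith [min_le_left (τ ω) c, hgap ω]))
    ((hτ.measurableSet_min_const_iff B).2 ⟨hB, hBc'⟩) hψ hψk₀
    (hk₀.trans_eq (congrArg μ ?_))).trans_eq (congrArg μ ?_)
  all_goals
    ext ω
    simp only [mem_inter_iff, mem_ofPred_eq]
    exact and_congr_left fun hω => by rw [hτ₁B ω hω]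

theorem JointCUD.noConditionalArbitrage (hCUD : JointCUD μ T F S) {τ τ' : Ω → ℝ}
    (hτ : IsStoppingTime F fun ω => (τ ω : WithTop ℝ))
    (hτ' : IsStoppingTime F fun ω => (τ' ω : WithTop ℝ)) (hτ0 : ∀ ω, 0 ≤ τ ω) {h : ℝ}
    (hh : 0 < h) (hgap : ∀ ω, τ ω + h ≤ τ' ω) {ψ : Ω → EuclideanSpace ℝ (Fin d)}
    (hψ : Measurable[hτ.measurableSpace] ψ) :
    NoConditionalArbitrage μ hτ.measurableSpace
      fun ω => ⟪ψ ω, S (min T (τ' ω)) ω - S (min T (τ ω)) ω⟫ := by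
  intro G hG hG_nonneg
  rw [ae_iff]
  by_contra hne
  -- cut `G` into countably many `F_τ`-events on which `ψ` has a fixed sign pattern, one
  -- coordinate of `ψ` does not vanish, and `τ` stays a fixed distance below `T`
  let piece (p : Fin d × (Fin d → Bool) × ℕ) : Set Ω :=
    G ∩ {ω | ψ ω p.1 ≠ 0} ∩ {ω | ∀ k, ψ ω k ∈ if p.2.1 k then Iic 0 else Ioi 0} ∩
      {ω | τ ω ≤ T - 1 / (p.2.2 + 1)}
  have hcover : {ω | ¬(ω ∈ G → ⟪ψ ω, S (min T (τ' ω)) ω - S (min T (τ ω)) ω⟫ = 0)} ⊆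
      ⋃ p, {ω | S (min T (τ ω)) ω p.1 ≠ S (min T (τ' ω)) ω p.1} ∩ piece p := by
    intro ω hω
    obtain ⟨hωG, hne⟩ := Classical.not_imp.1 hω
    obtain ⟨k, hψk, hSk⟩ := EuclideanSpace.exists_ne_zero_of_real_inner_ne_zero hne
    have hτT : τ ω < T := by
      by_contra! hTτ
      rw [min_eq_left hTτ, min_eq_left (by linarith [hgap ω]), sub_self, inner_zero_right] at hne
      exact hne rfl
    obtain ⟨m, hm⟩ := exists_nat_one_div_lt (sub_pos.2 hτT)
    refine mem_iUnion.2 ⟨(k, fun i => decide (ψ ω i ≤ 0), m), ?_, ⟨⟨hωG, hψk⟩, fun i => ?_⟩, ?_⟩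
    · exact (sub_ne_zero.1 (by simpa using hSk)).symm
    · by_cases hi : ψ ω i ≤ 0 <;> simp [hi, not_le.1]
    · simp only [mem_ofPred_eq]
      linarith
  obtain ⟨⟨k₀, α, m⟩, hpos⟩ := exists_measure_pos_of_not_measure_iUnion_null
    fun h0 => hne (measure_mono_null hcover h0)
  obtain ⟨ω₀, -, hω₀⟩ := nonempty_of_measure_ne_zero hpos.ne'
  have hcoord (k : Fin d) : Measurable[hτ.measurableSpace] fun ω => ψ ω k := by fun_prop
  have hpiece : MeasurableSet[hτ.measurableSpace] (piece (k₀, α, m)) := by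
    refine ((hG.inter (hcoord k₀ (measurableSet_singleton 0).compl)).inter ?_).inter ?_
    · simp only [ofPred_forall]
      exact .iInter fun k => hcoord k (by split_ifs; exacts [measurableSet_Iic, measurableSet_Ioi])
    · have := hτ.measurableSet_le' (T - 1 / (m + 1))
      simp only [WithTop.coe_le_coe] at this
      exact this
  have hneg := hCUD.measure_inner_neg_inter_pos_of_le hτ hτ' hτ0 hh hgap
    ⟨(hτ0 ω₀).trans hω₀.2, sub_lt_self T (by positivity)⟩ hpiece
    (fun ω hω => hω.2) (fun ω hω => hω.1.2) (fun ω hω => hω.1.1.2) hpos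
  refine hneg.ne' (measure_mono_null ?_ (ae_iff.1 hG_nonneg))
  rintro ω ⟨hω, ⟨⟨hωG, -⟩, -⟩, -⟩
  exact fun h => absurd (h hωG) (not_le.2 hω)

end JointCUD

theorem no_arbitrage_in_cheridito_class_of_jointCUD_general
    {mΩ : MeasurableSpace Ω} (μ : Measure Ω)
    (T : ℝ) (d : ℕ)
    (F : MeasureTheory.Filtration ℝ mΩ)
    (S : ℝ → Ω → EuclideanSpace ℝ (Fin d))
    (hScadlag_r : ∀ ω t, ContinuousWithinAt (fun s => S s ω) (Set.Ici t) t)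
    (hSadapted : ∀ t : ℝ, Measurable[F t] (S t))
    (hCUD : JointCUD μ T F S) :
    ¬ ∃ (n : ℕ) (τ : Fin (n + 1) → Ω → ℝ) (φ : Fin n → Ω → EuclideanSpace ℝ (Fin d))
        (h : ℝ) (hst : ∀ j, IsStoppingTime F (fun ω => (τ j ω : WithTop ℝ))),
      0 < h ∧ (∀ ω, τ 0 ω = 0) ∧ (∀ (j : Fin (n + 1)) ω, 0 ≤ τ j ω) ∧
      -- Cheridito class: waiting time at least h between consecutive trading times
      (∀ (j : Fin n) ω, τ j.castSucc ω + h ≤ τ j.succ ω) ∧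
      -- the portfolio held on (τ_j, τ_{j+1}] is F_{τ_j}-measurable
      (∀ j : Fin n, Measurable[(hst j.castSucc).measurableSpace] (φ j)) ∧
      -- arbitrage: V_T(Φ;0) ≥ 0 a.s. and V_T(Φ;0) > 0 with positive probability
      (∀ᵐ ω ∂μ, 0 ≤ ∑ j : Fin n,
        ⟪φ j ω, S (min T (τ j.succ ω)) ω - S (min T (τ j.castSucc ω)) ω⟫) ∧
      0 < μ {ω | 0 < ∑ j : Fin n,
        ⟪φ j ω, S (min T (τ j.succ ω)) ω - S (min T (τ j.castSucc ω)) ω⟫} := by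
  rintro ⟨n, τ, φ, h, hst, hh, -, hτ0, hgap, hφ, hnonneg, hpos⟩
  have hprog := isStronglyProgressive_of_continuousWithinAt_Ici hSadapted hScadlag_r
  have hmono (ω : Ω) : Monotone fun j => τ j ω :=
    Fin.monotone_iff_le_succ.2 fun j => by linarith [hgap j ω]
  have hS {k l : Fin (n + 1)} (hkl : k ≤ l) :
      Measurable[(hst l).measurableSpace] fun ω => S (min T (τ k ω)) ω :=
    hprog.measurable_min_const_of_le (hst k) (hst l) (fun ω => hmono ω hkl) T
  have hmeas (i j : Fin n) (hij : i < j) : Measurable[(hst j.castSucc).measurableSpace]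
      fun ω => ⟪φ i ω, S (min T (τ i.succ ω)) ω - S (min T (τ i.castSucc ω)) ω⟫ := by
    have hij' : i.castSucc ≤ j.castSucc := Fin.castSucc_le_castSucc_iff.2 hij.le
    refine ((hφ i).mono ((hst _).measurableSpace_mono _ fun ω => ?_) le_rfl).inner
      ((hS (Fin.succ_le_castSucc_iff.2 hij)).sub (hS hij'))
    exact WithTop.coe_le_coe.2 (hmono ω hij')
  have hzero := ae_sum_eq_zero_of_noConditionalArbitrage hmeas
    (fun j => hCUD.noConditionalArbitrage (hst _) (hst _) (hτ0 _) hh (hgap j) (hφ j)) hnonneg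
  exact hpos.ne' (measure_mono_null (fun ω hω => hω.ne') (ae_iff.1 hzero))

/-- the joint CUD condition implies absence of arbitrage in the Cheridito
class (simple strategies with a minimal waiting time h > 0 between rebalancing times). -/
theorem no_arbitrage_in_cheridito_class_of_jointCUD
    {mΩ : MeasurableSpace Ω} (μ : Measure Ω) [IsProbabilityMeasure μ]
    (T : ℝ) (hT : 0 < T) (d : ℕ)
    (F : MeasureTheory.Filtration ℝ mΩ)
    (S : ℝ → Ω → EuclideanSpace ℝ (Fin d))
    (hScadlag_r : ∀ ω t, ContinuousWithinAt (fun s => S s ω) (Set.Ici t) t)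
    (hScadlag_l : ∀ ω t, ∃ L, Filter.Tendsto (fun s => S s ω) (nhdsWithin t (Set.Iio t)) (nhds L))
    (hSadapted : ∀ t : ℝ, Measurable[F t] (S t))
    (hCUD : JointCUD μ T F S) :
    ¬ ∃ (n : ℕ) (τ : Fin (n + 1) → Ω → ℝ) (φ : Fin n → Ω → EuclideanSpace ℝ (Fin d))
        (h : ℝ) (hst : ∀ j, IsStoppingTime F (fun ω => (τ j ω : WithTop ℝ))),
      0 < h ∧ (∀ ω, τ 0 ω = 0) ∧ (∀ (j : Fin (n + 1)) ω, 0 ≤ τ j ω) ∧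
      -- Cheridito class: waiting time at least h between consecutive trading times
      (∀ (j : Fin n) ω, τ j.castSucc ω + h ≤ τ j.succ ω) ∧
      -- the portfolio held on (τ_j, τ_{j+1}] is F_{τ_j}-measurable
      (∀ j : Fin n, Measurable[(hst j.castSucc).measurableSpace] (φ j)) ∧
      -- arbitrage: V_T(Φ;0) ≥ 0 a.s. and V_T(Φ;0) > 0 with positive probability
      (∀ᵐ ω ∂μ, 0 ≤ ∑ j : Fin n,
        ⟪φ j ω, S (min T (τ j.succ ω)) ω - S (min T (τ j.castSucc ω)) ω⟫) ∧
      0 < μ {ω | 0 < ∑ j : Fin n,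
        ⟪φ j ω, S (min T (τ j.succ ω)) ω - S (min T (τ j.castSucc ω)) ω⟫} :=
  no_arbitrage_in_cheridito_class_of_jointCUD_general μ T d F S hScadlag_r hSadapted hCUD
end
end
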